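/- Callebaut inequality for weighted geometric means (upper part): for positive definite matrices A_1,...,A_m, B_1,...,B_m and s ∈ [0,1], one has (∑_{j=1}^m A_j ♯_s B_j) ♯ (∑_{j=1}^m A_j ♯_(1-s) B_j) ≤ (∑_{j=1}^m A_j) ♯ (∑_{j=1}^m B_j) in the Loewner order. -/

import Mathlib

open Matrix Finset
open scoped ComplexOrder

/-- Real power of a matrix via the spectral decomposition (junk value if not Hermitian). -/
noncomputable def mrpow {l : Type*} [Fintype l] [DecidableEq l] (A : Matrix l l ℂ) (r : ℝ) :
    Matrix l l ℂ :=
  if hA : A.IsHermitian then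
    (hA.eigenvectorUnitary : Matrix l l ℂ) *
      Matrix.diagonal (fun i => ((hA.eigenvalues i ^ r : ℝ) : ℂ)) *
      (star hA.eigenvectorUnitary : Matrix l l ℂ)
  else A

/-- Weighted matrix geometric mean `A ♯ₜ B = A^(1/2) (A^(-1/2) B A^(-1/2))^t A^(1/2)`. -/
noncomputable def wgmean {l : Type*} [Fintype l] [DecidableEq l] (A B : Matrix l l ℂ) (t : ℝ) :
    Matrix l l ℂ :=
  mrpow A (1/2) * mrpow (mrpow A (-(1/2)) * B * mrpow A (-(1/2))) t * mrpow A (1/2)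

/-- Loewner order: `A ≤ B` iff `B - A` is positive semidefinite. -/
def loewnerLE {l : Type*} [Fintype l] [DecidableEq l] (A B : Matrix l l ℂ) : Prop :=
  (B - A).PosSemidef

/-!
The geometric mean `M ♯ N` is the largest Hermitian `Z` with `[[M, Z], [Z, N]] ≥ 0`: by the Schur
complement such a `Z` satisfies `Z M⁻¹ Z ≤ N`, and `Z² ≤ W² → Z ≤ W` (for `W > 0`) turns this into
`Z ≤ M ♯ N`. Hence `♯` is monotone and superadditive, since these block matrices add up.

The identity `(M ♯_p N) ♯ (M ♯_q N) = M ♯_{(p+q)/2} N` then shows that the set of `t` with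
`∑ Aⱼ ♯_t Bⱼ ≤ (∑ Aⱼ) ♯_t (∑ Bⱼ)` is closed under midpoints. It contains `0` and `1` and is closed,
so it contains `[0, 1]`. Applying this at `s` and `1 - s` and using the monotonicity of `♯` proves
the theorem.
-/

open scoped MatrixOrder

open Set in
lemma Icc_subset_of_isClosed_of_add_div_two_mem {S : Set ℝ} (hS : IsClosed S) {a b : ℝ}
    (ha : a ∈ S) (hb : b ∈ S) (hmid : ∀ x ∈ S, ∀ y ∈ S, (x + y) / 2 ∈ S) : Icc a b ⊆ S := by
  intro t ht
  by_contra htS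
  have hbddL : BddAbove (S ∩ Icc a t) := bddAbove_Icc.mono inter_subset_right
  have hbddR : BddBelow (S ∩ Icc t b) := bddBelow_Icc.mono inter_subset_right
  obtain ⟨hxS, hax, hxt⟩ : sSup (S ∩ Icc a t) ∈ S ∩ Icc a t :=
    (hS.inter isClosed_Icc).csSup_mem ⟨a, ha, le_rfl, ht.1⟩ hbddL
  obtain ⟨hyS, hty, hyb⟩ : sInf (S ∩ Icc t b) ∈ S ∩ Icc t b :=
    (hS.inter isClosed_Icc).csInf_mem ⟨b, hb, ht.2, le_rfl⟩ hbddR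
  have hxt' : sSup (S ∩ Icc a t) < t := hxt.lt_of_ne fun h => htS (h ▸ hxS)
  have hty' : t < sInf (S ∩ Icc t b) := hty.lt_of_ne fun h => htS (h.symm ▸ hyS)
  have hm := hmid _ hxS _ hyS
  rcases le_total ((sSup (S ∩ Icc a t) + sInf (S ∩ Icc t b)) / 2) t with h | h
  · have := le_csSup hbddL ⟨hm, by linarith, h⟩
    linarith
  · have := csInf_le hbddR ⟨hm, h, by linarith⟩
    linarith

lemma conj_mul_conj_mul_conj {α : Type*} [Monoid α] {t u : α} (htu : t * u = 1) (hut : u * t = 1)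
    (x y z : α) : (t * x * t) * (u * y * u) * (t * z * t) = t * (x * y * z) * t := by
  simp only [mul_assoc]
  rw [← mul_assoc t u, htu, one_mul, ← mul_assoc u t, hut, one_mul]

lemma Matrix.fromBlocks_sum {ι l m n o α : Type*} [AddCommMonoid α] (s : Finset ι)
    (A : ι → Matrix n l α) (B : ι → Matrix n m α) (C : ι → Matrix o l α) (D : ι → Matrix o m α) :
    fromBlocks (∑ i ∈ s, A i) (∑ i ∈ s, B i) (∑ i ∈ s, C i) (∑ i ∈ s, D i) =
      ∑ i ∈ s, fromBlocks (A i) (B i) (C i) (D i) := by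
  classical
  induction s using Finset.induction_on with
  | empty => simp
  | insert i s hi ih => simp only [Finset.sum_insert hi, ← ih, fromBlocks_add]

section

variable {l : Type*} [Fintype l]

lemma isClosed_setOf_posSemidef : IsClosed {A : Matrix l l ℂ | A.PosSemidef} := by
  simp only [posSemidef_iff_dotProduct_mulVec, Set.ofPred_and, Set.ofPred_forall]
  exact (isClosed_eq continuous_id.matrix_conjTranspose continuous_id).inter
    (isClosed_iInter fun x => isClosed_le continuous_const (by fun_prop))

lemma Matrix.IsHermitian.mul_mul_le_mul_mul {T X Y : Matrix l l ℂ} (hT : T.IsHermitian)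
    (h : X ≤ Y) : T * X * T ≤ T * Y * T := by
  simpa only [star_eq_conjTranspose, hT.eq] using star_left_conjugate_le_conjugate h T

variable [DecidableEq l]

lemma Matrix.PosDef.mul_mul_self_of_posDef {P T : Matrix l l ℂ} (hP : P.PosDef)
    (hT : T.PosDef) : (T * P * T).PosDef := by
  have h := (Matrix.IsUnit.posDef_star_left_conjugate_iff hT.isUnit).mpr hP
  rwa [star_eq_conjTranspose, hT.1.eq] at h

lemma Matrix.PosSemidef.fromBlocks_zero {P Q : Matrix l l ℂ} (hP : P.PosSemidef)
    (hQ : Q.PosSemidef) : (fromBlocks P 0 0 Q).PosSemidef := by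
  have hsq : ∀ X : Matrix l l ℂ, X.PosSemidef → (CFC.sqrt X)ᴴ * CFC.sqrt X = X := fun X hX => by
    rw [← star_eq_conjTranspose, (CFC.sqrt_nonneg X).isSelfAdjoint.star_eq,
      CFC.sqrt_mul_sqrt_self X (nonneg_iff_posSemidef.mpr hX)]
  have h := posSemidef_conjTranspose_mul_self (fromBlocks (CFC.sqrt P) 0 0 (CFC.sqrt Q))
  simpa only [fromBlocks_conjTranspose, fromBlocks_multiply, hsq P hP, hsq Q hQ,
    conjTranspose_zero, zero_mul, mul_zero, add_zero, zero_add] using h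

lemma Matrix.IsHermitian.posSemidef_of_eigenpair {D : Matrix l l ℂ} (hD : D.IsHermitian)
    (h : ∀ (μ : ℝ) (v : l → ℂ), v ≠ 0 → D *ᵥ v = (μ : ℂ) • v → 0 ≤ μ) : D.PosSemidef := by
  refine hD.posSemidef_iff_eigenvalues_nonneg.mpr fun i =>
    h _ ⇑(hD.eigenvectorBasis i) ?_ ?_
  · exact fun h0 => hD.eigenvectorBasis.orthonormal.ne_zero i (by ext j; exact congrFun h0 j)
  · rw [hD.mulVec_eigenvectorBasis i]
    ext j
    simp

lemma Matrix.IsHermitian.le_of_mul_self_le_mul_self {Z W : Matrix l l ℂ} (hZ : Z.IsHermitian)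
    (hW : W.PosDef) (h : Z * Z ≤ W * W) : Z ≤ W := by
  refine (hW.1.sub hZ).posSemidef_of_eigenpair fun μ v hv hDv => ?_
  by_contra! hμ
  -- With `D = W - Z` and `D v = μ v`: `⟪v, (W² - Z²) v⟫ = ⟪v, (W D + D W - D²) v⟫ < 0`.
  have hsq : W * W - Z * Z = W * (W - Z) + (W - Z) * W - (W - Z) * (W - Z) := by noncomm_ring
  have hDv' : star v ᵥ* (W - Z) = (μ : ℂ) • star v := by
    conv_lhs => rw [← (hW.1.sub hZ).eq]
    rw [← star_mulVec, hDv, star_smul, Complex.star_def, Complex.conj_ofReal]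
  have key : star v ⬝ᵥ ((W * W - Z * Z) *ᵥ v) =
      2 * μ * (star v ⬝ᵥ (W *ᵥ v)) - μ ^ 2 * (star v ⬝ᵥ v) := by
    rw [hsq, sub_mulVec, add_mulVec, ← mulVec_mulVec, ← mulVec_mulVec, ← mulVec_mulVec, hDv,
      mulVec_smul, dotProduct_sub, dotProduct_add, dotProduct_mulVec _ (W - Z), hDv',
      dotProduct_mulVec _ (W - Z), hDv']
    simp only [dotProduct_smul, smul_dotProduct, smul_eq_mul]
    ring
  have hneg : 2 * (μ : ℂ) * (star v ⬝ᵥ (W *ᵥ v)) < μ ^ 2 * (star v ⬝ᵥ v) :=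
    (mul_neg_of_neg_of_pos (mul_neg_of_pos_of_neg two_pos (by exact_mod_cast hμ))
      (hW.dotProduct_mulVec_pos hv)).trans_le
      (mul_nonneg (by exact_mod_cast sq_nonneg μ) (dotProduct_star_self_pos_iff.mpr hv).le)
  have hnonneg := (le_iff.mp h).dotProduct_mulVec_nonneg v
  rw [key] at hnonneg
  exact not_lt_of_ge (sub_nonneg.mp hnonneg) hneg

end

section mrpow

variable {l : Type*} [Fintype l] [DecidableEq l] {A : Matrix l l ℂ}

lemma mrpow_eq_cfc (hA : A.IsHermitian) (r : ℝ) : mrpow A r = cfc (fun x : ℝ => x ^ r) A := by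
  rw [mrpow, dif_pos hA, hA.cfc_eq, IsHermitian.cfc, Unitary.conjStarAlgAut_apply]
  rfl

lemma Matrix.PosDef.spectrum_real_pos (hA : A.PosDef) {x : ℝ} (hx : x ∈ spectrum ℝ A) : 0 < x :=
  (isStrictlyPositive_iff_posDef.mpr hA).spectrum_pos hx

lemma Matrix.continuousOn_spectrum_real (A : Matrix l l ℂ) (f : ℝ → ℝ) :
    ContinuousOn f (spectrum ℝ A) :=
  A.finite_real_spectrum.continuousOn f

lemma mrpow_isHermitian (hA : A.IsHermitian) (r : ℝ) : (mrpow A r).IsHermitian := by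
  rw [mrpow_eq_cfc hA]
  exact cfc_predicate _ A

lemma mrpow_posDef (hA : A.PosDef) (r : ℝ) : (mrpow A r).PosDef := by
  rw [mrpow_eq_cfc hA.1, ← isStrictlyPositive_iff_posDef]
  exact (cfc_isStrictlyPositive_iff _ _ (A.continuousOn_spectrum_real _) hA.1).mpr
    fun x hx => Real.rpow_pos_of_pos (hA.spectrum_real_pos hx) r

lemma mrpow_zero (hA : A.IsHermitian) : mrpow A 0 = 1 := by
  simp only [mrpow_eq_cfc hA, Real.rpow_zero, cfc_const_one ℝ A]

lemma mrpow_one (hA : A.IsHermitian) : mrpow A 1 = A := by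
  simp only [mrpow_eq_cfc hA, Real.rpow_one, cfc_id' ℝ A]

lemma mrpow_add (hA : A.PosDef) (r s : ℝ) : mrpow A r * mrpow A s = mrpow A (r + s) := by
  simp only [mrpow_eq_cfc hA.1]
  rw [← cfc_mul _ _ A (A.continuousOn_spectrum_real _) (A.continuousOn_spectrum_real _)]
  exact cfc_congr fun x hx => (Real.rpow_add (hA.spectrum_real_pos hx) r s).symm

lemma mrpow_mul_mrpow_neg (hA : A.PosDef) (r : ℝ) : mrpow A r * mrpow A (-r) = 1 := by
  rw [mrpow_add hA, add_neg_cancel, mrpow_zero hA.1]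

lemma mrpow_neg_mul_mrpow (hA : A.PosDef) (r : ℝ) : mrpow A (-r) * mrpow A r = 1 := by
  rw [mrpow_add hA, neg_add_cancel, mrpow_zero hA.1]

lemma mrpow_inv (hA : A.PosDef) (r : ℝ) : (mrpow A r)⁻¹ = mrpow A (-r) :=
  Matrix.inv_eq_right_inv (mrpow_mul_mrpow_neg hA r)

lemma mrpow_conj_mrpow_neg_conj (hA : A.PosDef) (r : ℝ) (X : Matrix l l ℂ) :
    mrpow A r * (mrpow A (-r) * X * mrpow A (-r)) * mrpow A r = X := by
  simp only [mul_assoc, mrpow_neg_mul_mrpow hA, mul_one]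
  rw [← mul_assoc, mrpow_mul_mrpow_neg hA, one_mul]

lemma mrpow_mul_self_half (hA : A.PosDef) : mrpow (A * A) (1 / 2) = A := by
  have hsq : A * A = cfc (fun x : ℝ => x * x) A := by
    rw [cfc_mul _ _ A, cfc_id' ℝ A]
  have hAA : (A * A).IsHermitian := hsq ▸ cfc_predicate _ A
  rw [mrpow_eq_cfc hAA, hsq, ← cfc_comp' _ _ A ((A.finite_real_spectrum.image _).continuousOn _)
    (A.continuousOn_spectrum_real _)]
  conv_rhs => rw [← cfc_id' ℝ A]
  exact cfc_congr fun x hx =>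
    (Real.sqrt_eq_rpow _).symm.trans (Real.sqrt_mul_self (hA.spectrum_real_pos hx).le)

lemma continuous_mrpow (hA : A.PosDef) : Continuous fun t : ℝ => mrpow A t := by
  simp only [mrpow, dif_pos hA.1]
  refine (continuous_const.matrix_mul (Continuous.matrix_diagonal ?_)).matrix_mul continuous_const
  exact continuous_pi fun i => Complex.continuous_ofReal.comp
    (Real.continuous_const_rpow (hA.eigenvalues_pos i).ne')

end mrpow

section wgmean

variable {l : Type*} [Fintype l] [DecidableEq l] {M N K X Y X' Y' Z : Matrix l l ℂ}

lemma conj_mrpow_neg_half_posDef (hM : M.PosDef) (hN : N.PosDef) :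
    (mrpow M (-(1 / 2)) * N * mrpow M (-(1 / 2))).PosDef :=
  hN.mul_mul_self_of_posDef (mrpow_posDef hM _)

lemma wgmean_posDef (hM : M.PosDef) (hN : N.PosDef) (t : ℝ) : (wgmean M N t).PosDef :=
  (mrpow_posDef (conj_mrpow_neg_half_posDef hM hN) t).mul_mul_self_of_posDef (mrpow_posDef hM _)

lemma wgmean_zero (hM : M.PosDef) (hN : N.PosDef) : wgmean M N 0 = M := by
  rw [wgmean, mrpow_zero (conj_mrpow_neg_half_posDef hM hN).1, mul_one, mrpow_add hM, add_halves,
    mrpow_one hM.1]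

lemma wgmean_one (hM : M.PosDef) (hN : N.PosDef) : wgmean M N 1 = N := by
  rw [wgmean, mrpow_one (conj_mrpow_neg_half_posDef hM hN).1]
  exact mrpow_conj_mrpow_neg_conj hM _ N

lemma continuous_wgmean (hM : M.PosDef) (hN : N.PosDef) :
    Continuous fun t : ℝ => wgmean M N t :=
  (continuous_const.matrix_mul (continuous_mrpow (conj_mrpow_neg_half_posDef hM hN))).matrix_mul
    continuous_const

lemma inv_eq_mrpow_neg_half_mul_self (hM : M.PosDef) :
    M⁻¹ = mrpow M (-(1 / 2)) * mrpow M (-(1 / 2)) := by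
  rw [mrpow_add hM, show (-(1 / 2) + -(1 / 2) : ℝ) = -1 by norm_num, ← mrpow_inv hM,
    mrpow_one hM.1]

lemma gmean_mul_inv_mul_gmean (hM : M.PosDef) (hN : N.PosDef) :
    wgmean M N (1 / 2) * M⁻¹ * wgmean M N (1 / 2) = N := by
  have hC := conj_mrpow_neg_half_posDef hM hN
  have hinv : M⁻¹ = mrpow M (-(1 / 2)) * 1 * mrpow M (-(1 / 2)) := by
    rw [mul_one, inv_eq_mrpow_neg_half_mul_self hM]
  rw [wgmean, hinv, conj_mul_conj_mul_conj (mrpow_mul_mrpow_neg hM (1 / 2))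
    (mrpow_neg_mul_mrpow hM (1 / 2)), mul_one, mrpow_add hC, add_halves, mrpow_one hC.1]
  exact mrpow_conj_mrpow_neg_conj hM _ N

lemma eq_gmean_of_mul_inv_mul_eq (hM : M.PosDef) (hK : K.PosDef) (h : K * M⁻¹ * K = N) :
    K = wgmean M N (1 / 2) := by
  have hH := hK.mul_mul_self_of_posDef (mrpow_posDef hM (-(1 / 2)))
  have hsq : (mrpow M (-(1 / 2)) * K * mrpow M (-(1 / 2))) *
      (mrpow M (-(1 / 2)) * K * mrpow M (-(1 / 2))) =
      mrpow M (-(1 / 2)) * N * mrpow M (-(1 / 2)) := by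
    rw [← h, inv_eq_mrpow_neg_half_mul_self hM]
    simp only [mul_assoc]
  rw [wgmean, ← hsq, mrpow_mul_self_half hH]
  exact (mrpow_conj_mrpow_neg_conj hM _ K).symm

lemma gmean_wgmean_wgmean (hM : M.PosDef) (hN : N.PosDef) (p q : ℝ) :
    wgmean (wgmean M N p) (wgmean M N q) (1 / 2) = wgmean M N ((p + q) / 2) := by
  have hC := conj_mrpow_neg_half_posDef hM hN
  have hinv : (wgmean M N p)⁻¹ = mrpow M (-(1 / 2)) *
      mrpow (mrpow M (-(1 / 2)) * N * mrpow M (-(1 / 2))) (-p) * mrpow M (-(1 / 2)) := by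
    rw [wgmean, Matrix.mul_inv_rev, Matrix.mul_inv_rev, mrpow_inv hM, mrpow_inv hC]
    exact (mul_assoc _ _ _).symm
  refine (eq_gmean_of_mul_inv_mul_eq (wgmean_posDef hM hN p) (wgmean_posDef hM hN _) ?_).symm
  rw [hinv, wgmean, conj_mul_conj_mul_conj (mrpow_mul_mrpow_neg hM (1 / 2))
    (mrpow_neg_mul_mrpow hM (1 / 2)), mrpow_add hC, mrpow_add hC,
    show (p + q) / 2 + -p + (p + q) / 2 = q by ring]
  rfl

lemma fromBlocks_gmean_posSemidef (hM : M.PosDef) (hN : N.PosDef) :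
    (fromBlocks M (wgmean M N (1 / 2)) (wgmean M N (1 / 2)) N).PosSemidef := by
  let _ := hM.isUnit.invertible
  have hG := (wgmean_posDef hM hN (1 / 2)).1
  have h := (PosDef.fromBlocks₁₁ (wgmean M N (1 / 2)) N hM).mpr (by
    rw [hG.eq, gmean_mul_inv_mul_gmean hM hN, sub_self]
    exact PosSemidef.zero)
  rwa [hG.eq] at h

lemma le_gmean_of_fromBlocks_posSemidef (hM : M.PosDef) (hN : N.PosDef) (hZ : Z.IsHermitian)
    (h : (fromBlocks M Z Z N).PosSemidef) : Z ≤ wgmean M N (1 / 2) := by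
  let _ := hM.isUnit.invertible
  have hschur : Z * M⁻¹ * Z ≤ N := by
    have h' := (PosDef.fromBlocks₁₁ Z N hM).mp (by rwa [hZ.eq])
    rwa [hZ.eq] at h'
  have hTi := mrpow_isHermitian hM.1 (-(1 / 2))
  have hC := conj_mrpow_neg_half_posDef hM hN
  have hsq : (mrpow M (-(1 / 2)) * Z * mrpow M (-(1 / 2))) *
      (mrpow M (-(1 / 2)) * Z * mrpow M (-(1 / 2))) ≤
      mrpow (mrpow M (-(1 / 2)) * N * mrpow M (-(1 / 2))) (1 / 2) *
      mrpow (mrpow M (-(1 / 2)) * N * mrpow M (-(1 / 2))) (1 / 2) := by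
    rw [mrpow_add hC, add_halves, mrpow_one hC.1]
    convert hTi.mul_mul_le_mul_mul hschur using 1
    rw [inv_eq_mrpow_neg_half_mul_self hM]
    simp only [mul_assoc]
  have hTiZTi : (mrpow M (-(1 / 2)) * Z * mrpow M (-(1 / 2))).IsHermitian := by
    simpa only [hTi.eq] using isHermitian_mul_mul_conjTranspose (mrpow M (-(1 / 2))) hZ
  have h := (mrpow_isHermitian hM.1 (1 / 2)).mul_mul_le_mul_mul
    (hTiZTi.le_of_mul_self_le_mul_self (mrpow_posDef hC _) hsq)
  rwa [mrpow_conj_mrpow_neg_conj hM] at h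

lemma gmean_mono (hX : X.PosDef) (hY : Y.PosDef) (hXX' : X ≤ X') (hYY' : Y ≤ Y') :
    wgmean X Y (1 / 2) ≤ wgmean X' Y' (1 / 2) := by
  have hX' : X'.PosDef := by simpa using hX.add_posSemidef (le_iff.mp hXX')
  have hY' : Y'.PosDef := by simpa using hY.add_posSemidef (le_iff.mp hYY')
  refine le_gmean_of_fromBlocks_posSemidef hX' hY' (wgmean_posDef hX hY _).1 ?_
  have hsplit : fromBlocks X' (wgmean X Y (1 / 2)) (wgmean X Y (1 / 2)) Y' =
      fromBlocks X (wgmean X Y (1 / 2)) (wgmean X Y (1 / 2)) Y +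
        fromBlocks (X' - X) 0 0 (Y' - Y) := by
    simp [fromBlocks_add]
  rw [hsplit]
  exact (fromBlocks_gmean_posSemidef hX hY).add
    ((le_iff.mp hXX').fromBlocks_zero (le_iff.mp hYY'))

lemma sum_gmean_le_gmean_sum {ι : Type*} {s : Finset ι} (hs : s.Nonempty)
    {P Q : ι → Matrix l l ℂ} (hP : ∀ i ∈ s, (P i).PosDef) (hQ : ∀ i ∈ s, (Q i).PosDef) :
    ∑ i ∈ s, wgmean (P i) (Q i) (1 / 2) ≤ wgmean (∑ i ∈ s, P i) (∑ i ∈ s, Q i) (1 / 2) := by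
  refine le_gmean_of_fromBlocks_posSemidef (posDef_sum hs hP) (posDef_sum hs hQ)
    (posDef_sum hs fun i hi => wgmean_posDef (hP i hi) (hQ i hi) _).1 ?_
  rw [fromBlocks_sum]
  exact posSemidef_sum s fun i hi => fromBlocks_gmean_posSemidef (hP i hi) (hQ i hi)

lemma sum_wgmean_le_wgmean_sum {ι : Type*} {s : Finset ι} (hs : s.Nonempty)
    {A B : ι → Matrix l l ℂ} (hA : ∀ i ∈ s, (A i).PosDef) (hB : ∀ i ∈ s, (B i).PosDef)
    {t : ℝ} (ht : t ∈ Set.Icc 0 1) :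
    ∑ i ∈ s, wgmean (A i) (B i) t ≤ wgmean (∑ i ∈ s, A i) (∑ i ∈ s, B i) t := by
  have hAs := posDef_sum hs hA
  have hBs := posDef_sum hs hB
  have hwg : ∀ p, ∀ i ∈ s, (wgmean (A i) (B i) p).PosDef := fun p i hi =>
    wgmean_posDef (hA i hi) (hB i hi) p
  refine Icc_subset_of_isClosed_of_add_div_two_mem (S := {t | ∑ i ∈ s, wgmean (A i) (B i) t ≤
    wgmean (∑ i ∈ s, A i) (∑ i ∈ s, B i) t}) ?_ ?_ ?_ ?_ ht
  · exact isClosed_setOf_posSemidef.preimage ((continuous_wgmean hAs hBs).sub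
      (continuous_finsetSum s fun i hi => continuous_wgmean (hA i hi) (hB i hi)))
  · simp only [Set.mem_ofPred_eq, wgmean_zero hAs hBs]
    exact (sum_congr rfl fun i hi => wgmean_zero (hA i hi) (hB i hi)).le
  · simp only [Set.mem_ofPred_eq, wgmean_one hAs hBs]
    exact (sum_congr rfl fun i hi => wgmean_one (hA i hi) (hB i hi)).le
  · intro p hp q hq
    calc ∑ i ∈ s, wgmean (A i) (B i) ((p + q) / 2)
        = ∑ i ∈ s, wgmean (wgmean (A i) (B i) p) (wgmean (A i) (B i) q) (1 / 2) :=
          sum_congr rfl fun i hi => (gmean_wgmean_wgmean (hA i hi) (hB i hi) p q).symm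
      _ ≤ wgmean (∑ i ∈ s, wgmean (A i) (B i) p) (∑ i ∈ s, wgmean (A i) (B i) q) (1 / 2) :=
          sum_gmean_le_gmean_sum hs (hwg p) (hwg q)
      _ ≤ wgmean (wgmean (∑ i ∈ s, A i) (∑ i ∈ s, B i) p)
            (wgmean (∑ i ∈ s, A i) (∑ i ∈ s, B i) q) (1 / 2) :=
          gmean_mono (posDef_sum hs (hwg p)) (posDef_sum hs (hwg q)) hp hq
      _ = wgmean (∑ i ∈ s, A i) (∑ i ∈ s, B i) ((p + q) / 2) := gmean_wgmean_wgmean hAs hBs p q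

end wgmean

theorem callebaut_matrix_upper {l : Type*} [Fintype l] [DecidableEq l] (m : ℕ)
    (A B : Fin m → Matrix l l ℂ) (hA : ∀ j, (A j).PosDef) (hB : ∀ j, (B j).PosDef)
    (s : ℝ) (hs0 : 0 ≤ s) (hs1 : s ≤ 1) :
    loewnerLE (wgmean (∑ j, wgmean (A j) (B j) s) (∑ j, wgmean (A j) (B j) (1 - s)) (1/2))
      (wgmean (∑ j, A j) (∑ j, B j) (1/2)) := by
  rw [loewnerLE, ← le_iff]
  rcases Nat.eq_zero_or_pos m with rfl | hm
  · simp
  have hne : (univ : Finset (Fin m)).Nonempty := univ_nonempty_iff.mpr ⟨⟨0, hm⟩⟩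
  have hwg : ∀ p, ∀ j ∈ univ, (wgmean (A j) (B j) p).PosDef := fun p j _ =>
    wgmean_posDef (hA j) (hB j) p
  have hsum := fun t (ht : t ∈ Set.Icc (0 : ℝ) 1) =>
    sum_wgmean_le_wgmean_sum hne (fun j _ => hA j) (fun j _ => hB j) ht
  calc wgmean (∑ j, wgmean (A j) (B j) s) (∑ j, wgmean (A j) (B j) (1 - s)) (1/2)
      ≤ wgmean (wgmean (∑ j, A j) (∑ j, B j) s) (wgmean (∑ j, A j) (∑ j, B j) (1 - s)) (1/2) :=
        gmean_mono (posDef_sum hne (hwg s)) (posDef_sum hne (hwg (1 - s)))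
          (hsum s ⟨hs0, hs1⟩) (hsum (1 - s) ⟨by linarith, by linarith⟩)
    _ = wgmean (∑ j, A j) (∑ j, B j) (1/2) := by
        rw [gmean_wgmean_wgmean (posDef_sum hne fun j _ => hA j) (posDef_sum hne fun j _ => hB j),
          add_sub_cancel, one_div]
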